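/- Fix constants κ > 0, ε > 0 and σ with 0 < σ < 1. Let λ ∈ ℂ with λ ≠ 0, ξ ∈ ℝ³ and Ψ ∈ ℂ⁴ with Ψ ≠ 0. If the Fourier–Laplace mode with data (λ, ξ, Ψ) solves the linearized RAV Euler equations, then Re(λ) < 0 (the mode decays in time). -/

import Mathlib

open Filter

/-- Partial derivative in the `i`-th coordinate of a complex-valued function on `ℝ⁴`
(coordinate `0` is time, coordinates `1,2,3` are space). -/
noncomputable def pd (i : Fin 4) (f : (Fin 4 → ℝ) → ℂ) (x : Fin 4 → ℝ) : ℂ :=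
  deriv (fun s : ℝ => f (Function.update x i s)) (x i)

/-- The linearized RAV Euler equations:
`∂ₜρ + κ(∂₁u¹+∂₂u²+∂₃u³) = 0` and
`κ·∂ₜuʲ + σ²·∂ⱼρ = ε·(−∂ₜₜ + ∂₁₁ + ∂₂₂ + ∂₃₃)uʲ` for `j = 1,2,3`. -/
def LinearizedRAV (κ ε σ : ℝ) (ρ : (Fin 4 → ℝ) → ℂ) (u : Fin 3 → (Fin 4 → ℝ) → ℂ) : Prop :=
  (∀ x, pd 0 ρ x + (κ : ℂ) * ∑ j : Fin 3, pd j.succ (u j) x = 0) ∧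
  (∀ j : Fin 3, ∀ x, (κ : ℂ) * pd 0 (u j) x + (σ : ℂ) ^ 2 * pd j.succ ρ x
      = (ε : ℂ) * (-(pd 0 (pd 0 (u j)) x) + ∑ k : Fin 3, pd k.succ (pd k.succ (u j)) x))

/-- The Fourier–Laplace mode with temporal frequency `lam`, wave vector `ξ`
and amplitude `c`: `c · exp(λ t + i ⟨ξ, x⟩)`. -/
noncomputable def FLmode (lam : ℂ) (ξ : Fin 3 → ℝ) (c : ℂ) : (Fin 4 → ℝ) → ℂ :=
  fun x => c * Complex.exp (lam * (x 0 : ℂ) + Complex.I * ∑ j : Fin 3, (ξ j : ℂ) * (x j.succ : ℂ))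

/-!
Inserting the mode turns the equations into the algebraic system `λΨ⁰ + iκ⟨ξ, Ψ'⟩ = 0`,
`μ Ψʲ + iσ²ξⱼΨ⁰ = 0` with `μ = ε(λ² + |ξ|²) + κλ`. If `Ψ⁰ = 0`, some `Ψʲ ≠ 0` forces `μ = 0`, and
dividing by `λ` gives `Re λ · (ε + ε|ξ|²/|λ|²) = -κ`. Otherwise eliminating `Ψ'` leaves the cubic
`λμ + κσ²|ξ|² = 0` (with `ξ ≠ 0`, since `λ ≠ 0`), which is Hurwitz stable exactly because `σ < 1`.
-/

open Complex

lemma hasDerivAt_sum_mul_update {n : ℕ} (ω : Fin n → ℂ) (x : Fin n → ℝ) (i : Fin n) :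
    HasDerivAt (fun s : ℝ => ∑ k, ω k * (Function.update x i s k : ℂ)) (ω i) (x i) := by
  have hterm : ∀ k, HasDerivAt (fun s : ℝ => ω k * (Function.update x i s k : ℂ))
      (if k = i then ω k else 0) (x i) := by
    intro k
    by_cases hk : k = i
    · subst hk
      simpa using ((hasDerivAt_id (x k)).ofReal_comp).const_mul (ω k)
    · simpa [Function.update_of_ne hk, hk] using hasDerivAt_const (x i) (ω k * (x k : ℂ))
  simpa using HasDerivAt.fun_sum (u := Finset.univ) fun k _ => hterm k

lemma pd_mul_cexp_sum (ω : Fin 4 → ℂ) (c : ℂ) (i : Fin 4) :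
    pd i (fun x => c * exp (∑ k, ω k * (x k : ℂ))) =
      fun x => ω i * c * exp (∑ k, ω k * (x k : ℂ)) := by
  funext x
  have h := ((hasDerivAt_sum_mul_update ω x i).cexp).const_mul c
  rw [pd, h.deriv, Function.update_eq_self]
  ring

noncomputable def FLfreq (lam : ℂ) (ξ : Fin 3 → ℝ) : Fin 4 → ℂ :=
  Fin.cons lam fun j => I * ξ j

@[simp] lemma FLfreq_zero (lam : ℂ) (ξ : Fin 3 → ℝ) : FLfreq lam ξ 0 = lam := rfl

@[simp] lemma FLfreq_succ (lam : ℂ) (ξ : Fin 3 → ℝ) (j : Fin 3) :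
    FLfreq lam ξ j.succ = I * ξ j := rfl

lemma FLmode_eq (lam : ℂ) (ξ : Fin 3 → ℝ) (c : ℂ) :
    FLmode lam ξ c = fun x => c * exp (∑ k, FLfreq lam ξ k * (x k : ℂ)) := by
  funext x
  simp [FLmode, Fin.sum_univ_succ, mul_add, mul_assoc]

lemma pd_FLmode (lam : ℂ) (ξ : Fin 3 → ℝ) (c : ℂ) (i : Fin 4) :
    pd i (FLmode lam ξ c) = FLmode lam ξ (FLfreq lam ξ i * c) := by
  rw [FLmode_eq, FLmode_eq, pd_mul_cexp_sum]

@[simp]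
lemma FLmode_apply_zero (lam : ℂ) (ξ : Fin 3 → ℝ) (c : ℂ) : FLmode lam ξ c 0 = c := by
  simp [FLmode]

lemma LinearizedRAV.FLmode_amplitudes {κ ε σ : ℝ} {lam : ℂ} {ξ : Fin 3 → ℝ} {Ψ : Fin 4 → ℂ}
    (hsol : LinearizedRAV κ ε σ (FLmode lam ξ (Ψ 0)) (fun j => FLmode lam ξ (Ψ j.succ))) :
    lam * Ψ 0 + κ * I * ∑ j, ξ j * Ψ j.succ = 0 ∧
      ∀ j, (ε * (lam ^ 2 + ∑ k, (ξ k : ℂ) ^ 2) + κ * lam) * Ψ j.succ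
        + σ ^ 2 * I * ξ j * Ψ 0 = 0 := by
  obtain ⟨hρ, hu⟩ := hsol
  simp only [pd_FLmode, FLfreq_zero, FLfreq_succ] at hρ hu
  refine ⟨?_, fun j => ?_⟩
  · simpa [Finset.mul_sum, mul_assoc, mul_left_comm] using hρ 0
  · have h := hu j 0
    simp only [FLmode_apply_zero, Fin.sum_univ_three] at h ⊢
    linear_combination h + ε * (ξ 0 ^ 2 + ξ 1 ^ 2 + ξ 2 ^ 2 : ℂ) * Ψ j.succ * I_sq

lemma acoustic_dispersion_mul_eq_zero {ι : Type*} [Fintype ι] {lam μ c κ s : ℂ} {ξ : ι → ℝ}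
    {v : ι → ℂ} (hρ : lam * c + κ * I * ∑ j, ξ j * v j = 0)
    (hu : ∀ j, μ * v j + s * I * ξ j * c = 0) :
    (lam * μ + κ * s * ∑ j, (ξ j : ℂ) ^ 2) * c = 0 := by
  have hsum : μ * ∑ j, ξ j * v j = -(s * I * c) * ∑ j, (ξ j : ℂ) ^ 2 := by
    simp only [Finset.mul_sum]
    exact Finset.sum_congr rfl fun j _ => by linear_combination (ξ j : ℂ) * hu j
  linear_combination μ * hρ - κ * I * hsum + κ * s * c * (∑ j, (ξ j : ℂ) ^ 2) * I_sq

lemma re_neg_of_quadratic {ε κ a : ℝ} (hε : 0 < ε) (hκ : 0 < κ) (ha : 0 ≤ a) {lam : ℂ}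
    (hlam : lam ≠ 0) (h : ε * (lam ^ 2 + a) + κ * lam = 0) : lam.re < 0 := by
  have hdiv : ε * lam + ((ε * a : ℝ) : ℂ) * lam⁻¹ + κ = 0 := by
    push_cast
    field_simp
    linear_combination h
  have hre := congrArg re hdiv
  simp only [add_re, re_ofReal_mul, inv_re, ofReal_re, zero_re] at hre
  by_contra! hx
  have : 0 ≤ ε * a * (lam.re / normSq lam) :=
    mul_nonneg (by positivity) (div_nonneg hx (normSq_nonneg lam))
  linarith [mul_nonneg hε.le hx]

/-- Routh–Hurwitz for `ε λ³ + κ λ² + ε a λ + κ s a`: the condition `κ · ε a > ε · κ s a`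
is `s < 1`. -/
lemma re_neg_of_cubic {ε κ a s : ℝ} (hε : 0 < ε) (hκ : 0 < κ) (ha : 0 < a) (hs0 : 0 < s)
    (hs1 : s < 1) {lam : ℂ} (h : lam * (ε * (lam ^ 2 + a) + κ * lam) + κ * s * a = 0) :
    lam.re < 0 := by
  have hre := congrArg re h
  have him := congrArg im h
  simp only [add_re, add_im, mul_re, mul_im, ofReal_re, ofReal_im, zero_re, zero_im, pow_two,
    zero_mul, mul_zero, sub_zero, add_zero] at hre him
  set x := lam.re
  set y := lam.im
  by_contra! hx
  have him' : y * (ε * (3 * x ^ 2 - y ^ 2 + a) + 2 * κ * x) = 0 := by linear_combination him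
  rcases mul_eq_zero.mp him' with hy | hy
  · have hreal : ε * x ^ 3 + ε * a * x + κ * x ^ 2 + κ * s * a = 0 := by
      rw [hy] at hre
      linear_combination hre
    have : 0 < κ * s * a := by positivity
    have : 0 ≤ ε * x ^ 3 + ε * a * x + κ * x ^ 2 := by positivity
    linarith
  · have hy2 : ε * y ^ 2 = 3 * ε * x ^ 2 + ε * a + 2 * κ * x := by linear_combination -hy
    have hpoly : 8 * ε ^ 2 * x ^ 3 + 8 * ε * κ * x ^ 2 + 2 * κ ^ 2 * x + 2 * ε ^ 2 * a * x
        + ε * κ * a * (1 - s) = 0 := by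
      linear_combination (-ε) * hre - (3 * ε * x + κ) * hy2
    have : 0 < ε * κ * a * (1 - s) := mul_pos (by positivity) (by linarith)
    have : 0 ≤ 8 * ε ^ 2 * x ^ 3 + 8 * ε * κ * x ^ 2 + 2 * κ ^ 2 * x + 2 * ε ^ 2 * a * x := by
      positivity
    linarith

/-- Decay of Fourier–Laplace modes: any nontrivial Fourier–Laplace mode solution of the
linearized RAV Euler equations with `λ ≠ 0` has `Re(λ) < 0`. -/
theorem decay_of_FL_modes (κ ε σ : ℝ) (hκ : 0 < κ) (hε : 0 < ε)
    (hσ0 : 0 < σ) (hσ1 : σ < 1) (lam : ℂ) (hlam : lam ≠ 0) (ξ : Fin 3 → ℝ)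
    (Ψ : Fin 4 → ℂ) (hΨ : Ψ ≠ 0)
    (hsol : LinearizedRAV κ ε σ (FLmode lam ξ (Ψ 0)) (fun j => FLmode lam ξ (Ψ j.succ))) :
    lam.re < 0 := by
  obtain ⟨hρ, hu⟩ := hsol.FLmode_amplitudes
  have ha : 0 ≤ ∑ k, ξ k ^ 2 := by positivity
  by_cases hΨ0 : Ψ 0 = 0
  · obtain ⟨j, hj⟩ : ∃ j : Fin 3, Ψ j.succ ≠ 0 := by
      by_contra! h
      exact hΨ (funext (Fin.cases hΨ0 h))
    refine re_neg_of_quadratic hε hκ ha hlam ?_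
    simpa [hΨ0, hj] using hu j
  · have hξ : 0 < ∑ k, ξ k ^ 2 := by
      refine ha.lt_of_ne fun h0 => hΨ0 ?_
      have hξ0 : ∀ k, ξ k = 0 := fun k => by
        simpa using (Finset.sum_eq_zero_iff_of_nonneg fun k _ => sq_nonneg (ξ k)).mp h0.symm k
      simpa [hξ0, hlam] using hρ
    refine re_neg_of_cubic (s := σ ^ 2) hε hκ hξ (by positivity) (by nlinarith) ?_
    push_cast
    exact (mul_eq_zero.mp (acoustic_dispersion_mul_eq_zero hρ hu)).resolve_right hΨ0
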